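/- arXiv:2303.06805 — 5 statements merged into one kernel-verified Lean document; each statement's English description precedes it below -/
import Mathlib

section
/- The first-order differential operators 𝒟 and 𝒟† are mutually adjoint with respect to the weight W^{(ν)}_φ: for all N×N complex matrix polynomials P and Q, ∫₀^∞ (x P'(x) + x P(x)(A−1)) · W^{(ν)}_φ(x) · Q(x)^* dx = ∫₀^∞ P(x) · W^{(ν)}_φ(x) · (−x Q'(x) − Q(x)(1+ν+J) + (x φ'(x) − x) Q(x))^* dx. -/
/-!
Statement 0: The first-order differential operators `𝒟` and `𝒟†` are mutually adjoint with
respect to the Laguerre-type weight `W^{(ν)}_φ(x) = e^{xA} T^{(ν)}_φ(x) e^{xA^*}`: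
for all N×N complex matrix polynomials `P` and `Q`,
`∫₀^∞ (x P'(x) + x P(x)(A−1)) W^{(ν)}_φ(x) Q(x)^* dx
  = ∫₀^∞ P(x) W^{(ν)}_φ(x) (−x Q'(x) − Q(x)(1+ν+J) + (x φ'(x) − x) Q(x))^* dx`.
-/

open MeasureTheory Matrix Polynomial Filter

attribute [local instance] Matrix.normedAddCommGroup Matrix.normedSpace

noncomputable section

abbrev MatC (N : ℕ) := Matrix (Fin N) (Fin N) ℂ
abbrev MatPoly (N : ℕ) := Matrix (Fin N) (Fin N) (Polynomial ℂ)

instance matC_continuousENorm (N : ℕ) : ContinuousENorm (MatC N) :=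
  SeminormedAddGroup.toContinuousENorm

/-- `J = Σ_{k=1}^N k E_{k,k}`. -/
def Jmat (N : ℕ) : MatC N := Matrix.diagonal fun k => ((k : ℕ) + 1 : ℂ)

/-- `A = Σ_{k=1}^{N-1} a_k E_{k+1,k}`. -/
def Amat (N : ℕ) (a : ℕ → ℝ) : MatC N :=
  Matrix.of fun i j => if (i : ℕ) = (j : ℕ) + 1 then ((a ((j : ℕ) + 1) : ℝ) : ℂ) else 0

/-- evaluation of a matrix polynomial at a real point -/
def pEval {N : ℕ} (P : MatPoly N) (x : ℝ) : MatC N := P.map fun q => q.eval (x : ℂ)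

/-- entrywise derivative of a matrix polynomial -/
def pDeriv {N : ℕ} (P : MatPoly N) : MatPoly N := P.map fun q => Polynomial.derivative q

/-- `T^{(ν)}_φ(x) = e^{-φ(x)} Σ_{k=1}^N δ_k x^{ν+k} E_{k,k}`. -/
def Tmat (N : ℕ) (ν : ℝ) (δ : ℕ → ℝ) (φ : ℝ → ℝ) (x : ℝ) : MatC N :=
  Matrix.diagonal fun k =>
    ((Real.exp (-(φ x)) * δ ((k : ℕ) + 1) * x ^ (ν + ((k : ℕ) : ℝ) + 1) : ℝ) : ℂ)

/-- `W^{(ν)}_φ(x) = e^{xA} T^{(ν)}_φ(x) e^{xA^*}`. -/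
def Wmat (N : ℕ) (a : ℕ → ℝ) (ν : ℝ) (δ : ℕ → ℝ) (φ : ℝ → ℝ) (x : ℝ) : MatC N :=
  NormedSpace.exp ((x : ℂ) • Amat N a) * Tmat N ν δ φ x *
    NormedSpace.exp ((x : ℂ) • (Amat N a)ᴴ)

/-!
With `F(x) = x P(x) W(x) Q(x)^*`, the identity is `∫₀^∞ F' = 0`. Since `[A^*, J] = A^*`, one has
`e^{xA^*} J = (J + x A^*) e^{xA^*}`, and together with `x T' = (ν - x φ') T + T J` this gives the
Pearson equation `x W' = x A W + (ν - x φ') W + W J`. Hence `F' = (𝒟P) W Q^* - P W (𝒟†Q)^*`, and `F`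
vanishes at both ends of `(0, ∞)` by the boundary hypotheses.
-/

open NormedSpace (exp)

section BanachAlgebra

variable {𝔸 : Type*} [NormedRing 𝔸] [NormedAlgebra ℝ 𝔸] [CompleteSpace 𝔸]

theorem exp_neg_mul_exp (M : 𝔸) : exp (-M) * exp M = 1 := by
  have hball (y : 𝔸) : y ∈ Metric.eball (0 : 𝔸) (NormedSpace.expSeries ℝ 𝔸).radius := by
    simp [NormedSpace.expSeries_radius_eq_top]
  rw [← NormedSpace.exp_add_of_commute_of_mem_ball (Commute.refl M).neg_left (hball _) (hball _),
    neg_add_cancel, NormedSpace.exp_zero]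

theorem exp_smul_mul_eq_of_mul_sub_mul_eq {M J : 𝔸} (hMJ : M * J - J * M = M) (t : ℝ) :
    exp (t • M) * J = (J + t • M) * exp (t • M) := by
  have hcomm (s : ℝ) : Commute M (exp (s • M)) := ((Commute.refl M).smul_right s).exp_right
  have hcomm' (s : ℝ) : Commute M (exp (s • -M)) :=
    ((Commute.refl M).neg_right.smul_right s).exp_right
  have hinv (s : ℝ) : exp (s • M) * exp (s • -M) = 1 := by
    simpa [smul_neg] using exp_neg_mul_exp (-(s • M))
  -- `k' = exp (s • M) * (M * J - J * M - M) * exp (-(s • M)) = 0`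
  set k : ℝ → 𝔸 := fun s => exp (s • M) * J * exp (s • -M) - s • M
  have hk (s : ℝ) : HasDerivAt k 0 s := by
    have := (((hasDerivAt_exp_smul_const' M s).mul_const J).mul
      (hasDerivAt_exp_smul_const' (-M) s)).sub ((hasDerivAt_id s).smul_const M)
    refine this.congr_deriv ?_
    calc M * exp (s • M) * J * exp (s • -M) + exp (s • M) * J * (-M * exp (s • -M)) - (1 : ℝ) • M
        = exp (s • M) * (M * J - J * M) * exp (s • -M) - M := by
          simp only [(hcomm s).eq, (hcomm' s).eq, neg_mul, mul_neg, one_smul, mul_sub, sub_mul,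
            mul_assoc]
          abel
      _ = 0 := by rw [hMJ, ← (hcomm s).eq, mul_assoc, hinv, mul_one, sub_self]
  have hconst : k t = k 0 :=
    is_const_of_deriv_eq_zero (fun s => (hk s).differentiableAt) (fun s => (hk s).deriv) t 0
  have hkt : exp (t • M) * J * exp (t • -M) = J + t • M := by
    simpa [k, sub_eq_iff_eq_add] using hconst
  calc exp (t • M) * J = exp (t • M) * J * exp (t • -M) * exp (t • M) := by
        rw [mul_assoc _ (exp (t • -M)), smul_neg, exp_neg_mul_exp, mul_one]
    _ = (J + t • M) * exp (t • M) := by rw [hkt]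

theorem hasDerivAt_exp_smul_mul_mul_exp_smul {A B J : 𝔸} {T : ℝ → 𝔸} {c x : ℝ}
    (hBJ : B * J - J * B = B) (hx : x ≠ 0) (hT : HasDerivAt T (x⁻¹ • (c • T x + T x * J)) x) :
    HasDerivAt (fun y => exp (y • A) * T y * exp (y • B))
      (A * (exp (x • A) * T x * exp (x • B)) +
        x⁻¹ • (c • (exp (x • A) * T x * exp (x • B)) + exp (x • A) * T x * exp (x • B) * J)) x := by
  refine (((hasDerivAt_exp_smul_const' A x).mul hT).mul
    (hasDerivAt_exp_smul_const' B x)).congr_deriv ?_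
  have hJ : exp (x • B) * J = J * exp (x • B) + x • (B * exp (x • B)) := by
    rw [exp_smul_mul_eq_of_mul_sub_mul_eq hBJ, add_mul, smul_mul_assoc]
  rw [mul_assoc _ (exp (x • B)) J, hJ]
  simp only [mul_add, add_mul, smul_add, mul_smul_comm, smul_mul_assoc, smul_smul, mul_assoc,
    inv_mul_cancel₀ hx, one_smul, Pi.mul_apply]
  abel

end BanachAlgebra

section MatrixCalculus

variable {m n α : Type*} [Fintype n]

theorem hasDerivAt_matrix_iff [NormedAddCommGroup α] [NormedSpace ℝ α] {f : ℝ → Matrix m n α}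
    {f' : Matrix m n α} {x : ℝ} :
    HasDerivAt f f' x ↔ ∀ i j, HasDerivAt (fun y => f y i j) (f' i j) x :=
  hasDerivAt_pi.trans (forall_congr' fun _ => hasDerivAt_pi)

theorem HasDerivAt.matrix_diagonal [DecidableEq n] [NormedAddCommGroup α] [NormedSpace ℝ α]
    {d : ℝ → n → α} {d' : n → α} {x : ℝ} (hd : ∀ i, HasDerivAt (fun y => d y i) (d' i) x) :
    HasDerivAt (fun y => diagonal (d y)) (diagonal d') x := by
  refine hasDerivAt_matrix_iff.mpr fun i j => ?_
  rcases eq_or_ne i j with rfl | hij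
  · simpa using hd i
  · simpa [diagonal_apply_ne _ hij] using hasDerivAt_const x (0 : α)

/-- The sup norm on matrices is not submultiplicative, but the `L∞` operator norm is, and it induces
the same topology, which is all that `HasDerivAt` depends on. -/
theorem HasDerivAt.matrix_mul [DecidableEq n] [NormedRing α] [NormedAlgebra ℝ α]
    {f g : ℝ → Matrix n n α} {f' g' : Matrix n n α} {x : ℝ}
    (hf : HasDerivAt f f' x) (hg : HasDerivAt g g' x) :
    HasDerivAt (fun y => f y * g y) (f' * g x + f x * g') x := by
  let := Matrix.linftyOpNormedRing (n := n) (α := α)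
  let := Matrix.linftyOpNormedAlgebra (R := ℝ) (n := n) (α := α)
  exact hf.mul hg

end MatrixCalculus

section Weight

variable {N : ℕ}

theorem hasDerivAt_pEval (R : MatPoly N) (x : ℝ) :
    HasDerivAt (pEval R) (pEval (pDeriv R) x) x :=
  hasDerivAt_matrix_iff.mpr fun i j => by
    simpa [pEval, pDeriv] using (Polynomial.hasDerivAt (R i j) (x : ℂ)).comp_ofReal

theorem conjTranspose_Amat_mul_sub (a : ℕ → ℝ) :
    (Amat N a)ᴴ * Jmat N - Jmat N * (Amat N a)ᴴ = (Amat N a)ᴴ := by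
  ext i j
  simp only [Jmat, Matrix.sub_apply, mul_diagonal, diagonal_mul, conjTranspose_apply, Amat,
    of_apply]
  split_ifs with h
  · rw [h]; push_cast; ring
  · simp

theorem hasDerivAt_Tmat {ν : ℝ} {δ : ℕ → ℝ} {φ : ℝ → ℝ} {x : ℝ} (hx : 0 < x)
    (hφ : DifferentiableAt ℝ φ x) :
    HasDerivAt (Tmat N ν δ φ)
      (x⁻¹ • ((ν - x * deriv φ x) • Tmat N ν δ φ x + Tmat N ν δ φ x * Jmat N)) x := by
  have hentry (k : ℕ) : HasDerivAt (fun y => Real.exp (-φ y) * δ (k + 1) * y ^ (ν + k + 1))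
      (x⁻¹ * (ν - x * deriv φ x + (k + 1)) * (Real.exp (-φ x) * δ (k + 1) * x ^ (ν + k + 1)))
      x := by
    refine ((hφ.hasDerivAt.neg.exp.mul_const _).mul
      (Real.hasDerivAt_rpow_const (Or.inl hx.ne'))).congr_deriv ?_
    rw [Pi.neg_apply, Real.rpow_sub_one hx.ne']
    field_simp
    ring
  refine (HasDerivAt.matrix_diagonal fun k : Fin N => (hentry k).ofReal_comp).congr_deriv ?_
  ext i j
  rcases eq_or_ne i j with rfl | hij
  · simp only [Tmat, Jmat, diagonal_mul_diagonal, Matrix.smul_apply, Matrix.add_apply,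
      diagonal_apply_eq, Complex.real_smul]
    push_cast
    ring
  · simp [Tmat, Jmat, diagonal_apply_ne _ hij]

theorem hasDerivAt_Wmat (a : ℕ → ℝ) {ν : ℝ} {δ : ℕ → ℝ} {φ : ℝ → ℝ} {x : ℝ} (hx : 0 < x)
    (hφ : DifferentiableAt ℝ φ x) :
    HasDerivAt (Wmat N a ν δ φ) (Amat N a * Wmat N a ν δ φ x +
      x⁻¹ • ((ν - x * deriv φ x) • Wmat N a ν δ φ x + Wmat N a ν δ φ x * Jmat N)) x := by
  have hW : Wmat N a ν δ φ =
      fun y => exp (y • Amat N a) * Tmat N ν δ φ y * exp (y • (Amat N a)ᴴ) := by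
    funext y
    simp only [Wmat, Complex.coe_smul]
  rw [hW]
  let := Matrix.linftyOpNormedRing (n := Fin N) (α := ℂ)
  let := Matrix.linftyOpNormedAlgebra (R := ℝ) (n := Fin N) (α := ℂ)
  -- instance search does not find completeness for the operator-norm uniformity
  exact @hasDerivAt_exp_smul_mul_mul_exp_smul (MatC N) _ _ (FiniteDimensional.complete ℝ _)
    _ _ _ _ _ _ (conjTranspose_Amat_mul_sub a) hx.ne' (hasDerivAt_Tmat hx hφ)

end Weight

section Boundary

variable {N : ℕ}

theorem pEval_smul (p : ℂ[X]) (R : MatPoly N) (x : ℝ) :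
    pEval (p • R) x = p.eval (x : ℂ) • pEval R x := by
  ext i j
  simp [pEval]

def conjTransposePoly (R : MatPoly N) : MatPoly N :=
  (R.map (Polynomial.map (starRingEnd ℂ)))ᵀ

theorem pEval_conjTransposePoly (R : MatPoly N) (x : ℝ) :
    pEval (conjTransposePoly R) x = (pEval R x)ᴴ := by
  ext i j
  simp only [pEval, conjTransposePoly, map_apply, transpose_apply, conjTranspose_apply,
    Polynomial.eval_map]
  rw [Complex.star_def, ← Polynomial.eval₂_at_apply, Complex.conj_ofReal]

theorem smul_pEval_mul_mul_pEval_eq_sum (W : MatC N) (P R : MatPoly N) (x : ℝ) :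
    (x : ℂ) • (pEval P x * W * pEval R x) =
      ∑ i, ∑ k, single i k 1 * ((x : ℂ) • (W * pEval (P i k • R) x)) := by
  conv_lhs => rw [matrix_eq_sum_single (pEval P x)]
  simp only [Finset.sum_mul, Finset.smul_sum, pEval_smul, mul_smul_comm]
  refine Finset.sum_congr rfl fun i _ => Finset.sum_congr rfl fun k _ => ?_
  have hsingle : single i k (pEval P x i k) = (P i k).eval (x : ℂ) • single i k (1 : ℂ) := by
    rw [smul_single, smul_eq_mul, mul_one]
    rfl
  rw [hsingle, smul_mul_assoc, smul_mul_assoc, mul_assoc]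

theorem tendsto_smul_pEval_mul_mul_pEval {l : Filter ℝ} {W : ℝ → MatC N} (P R : MatPoly N)
    (h : ∀ R' : MatPoly N, Tendsto (fun x : ℝ => (x : ℂ) • (W x * pEval R' x)) l (nhds 0)) :
    Tendsto (fun x : ℝ => (x : ℂ) • (pEval P x * W x * pEval R x)) l (nhds 0) := by
  simp only [smul_pEval_mul_mul_pEval_eq_sum]
  rw [show (0 : MatC N) = ∑ i : Fin N, ∑ k : Fin N, single i k 1 * 0 by simp]
  exact tendsto_finsetSum _ fun i _ => tendsto_finsetSum _ fun k _ => (h _).const_mul _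

theorem tendsto_smul_pEval_mul_mul_conjTranspose {l : Filter ℝ} {W : ℝ → MatC N}
    (P Q : MatPoly N)
    (h : ∀ R : MatPoly N, Tendsto (fun x : ℝ => (x : ℂ) • (W x * pEval R x)) l (nhds 0)) :
    Tendsto (fun x : ℝ => (x : ℂ) • (pEval P x * W x * (pEval Q x)ᴴ)) l (nhds 0) := by
  simpa only [pEval_conjTransposePoly] using
    tendsto_smul_pEval_mul_mul_pEval P (conjTransposePoly Q) h

end Boundary

section Adjoint

variable {N : ℕ}

-- `opD a P x` and `opDDagger ν φ Q x` are the values at `x` of `𝒟 P` and `𝒟† Q`.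
def opD (a : ℕ → ℝ) (P : MatPoly N) (x : ℝ) : MatC N :=
  (x : ℂ) • pEval (pDeriv P) x + (x : ℂ) • (pEval P x * (Amat N a - 1))

def opDDagger (ν : ℝ) (φ : ℝ → ℝ) (Q : MatPoly N) (x : ℝ) : MatC N :=
  -((x : ℂ) • pEval (pDeriv Q) x) - pEval Q x * (((1 + ν : ℝ) : ℂ) • 1 + Jmat N) +
    ((x * deriv φ x - x : ℝ) : ℂ) • pEval Q x

theorem conjTranspose_Jmat : (Jmat N)ᴴ = Jmat N := by
  simp [Jmat, diagonal_conjTranspose, Pi.star_def]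

theorem conjTranspose_opDDagger (ν : ℝ) (φ : ℝ → ℝ) (Q : MatPoly N) (x : ℝ) :
    (opDDagger ν φ Q x)ᴴ =
      -((x : ℂ) • (pEval (pDeriv Q) x)ᴴ) - (((1 + ν : ℝ) : ℂ) • 1 + Jmat N) * (pEval Q x)ᴴ +
        ((x * deriv φ x - x : ℝ) : ℂ) • (pEval Q x)ᴴ := by
  simp [opDDagger, conjTranspose_Jmat]

theorem hasDerivAt_smul_pEval_mul_Wmat_mul_conjTranspose (a : ℕ → ℝ) {ν : ℝ} {δ : ℕ → ℝ}
    {φ : ℝ → ℝ} {x : ℝ} (hx : 0 < x) (hφ : DifferentiableAt ℝ φ x) (P Q : MatPoly N) :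
    HasDerivAt (fun y : ℝ => (y : ℂ) • (pEval P y * Wmat N a ν δ φ y * (pEval Q y)ᴴ))
      (opD a P x * Wmat N a ν δ φ x * (pEval Q x)ᴴ -
        pEval P x * Wmat N a ν δ φ x * (opDDagger ν φ Q x)ᴴ) x := by
  have hW := hasDerivAt_Wmat (N := N) a (ν := ν) (δ := δ) hx hφ
  set W := Wmat N a ν δ φ x
  set W' := Amat N a * W + x⁻¹ • ((ν - x * deriv φ x) • W + W * Jmat N)
  have hPearson : (x : ℂ) • W' = (x : ℂ) • (Amat N a * W) +
      (((ν - x * deriv φ x : ℝ) : ℂ) • W + W * Jmat N) := by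
    rw [smul_add, Complex.coe_smul x (x⁻¹ • _), smul_smul, mul_inv_cancel₀ hx.ne', one_smul,
      Complex.coe_smul, Complex.coe_smul]
  have hG := ((hasDerivAt_pEval P x).matrix_mul hW).matrix_mul (hasDerivAt_pEval Q x).star
  refine ((hasDerivAt_id x).ofReal_comp.smul hG).congr_deriv ?_
  set P₀ := pEval P x
  set Q₀ := (pEval Q x)ᴴ
  calc (x : ℂ) • ((pEval (pDeriv P) x * W + P₀ * W') * Q₀ + P₀ * W * star (pEval (pDeriv Q) x)) +
        ((1 : ℝ) : ℂ) • (P₀ * W * Q₀)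
      = (x : ℂ) • (pEval (pDeriv P) x * W * Q₀) + P₀ * ((x : ℂ) • W') * Q₀ +
          (x : ℂ) • (P₀ * W * (pEval (pDeriv Q) x)ᴴ) + P₀ * W * Q₀ := by
        simp only [add_mul, smul_add, smul_mul_assoc, mul_smul_comm, Complex.ofReal_one, one_smul]
        rfl
    _ = _ := by
        rw [hPearson, conjTranspose_opDDagger, opD]
        simp only [add_mul, mul_add, sub_mul, mul_sub, smul_mul_assoc, mul_smul_comm,
          mul_assoc, mul_one, one_mul, mul_neg, Complex.ofReal_sub, Complex.ofReal_mul,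
          Complex.ofReal_add, Complex.ofReal_one]
        module

end Adjoint

theorem mutually_adjoint_D_Ddagger_general
    (N : ℕ) (a : ℕ → ℝ) (ν : ℝ)
    (δ : ℕ → ℝ)
    (φ : ℝ → ℝ) (hφ : ∀ x ∈ Set.Ici (0 : ℝ), AnalyticAt ℝ φ x)
    -- boundary condition: `x W(x) R(x) → 0` at both endpoints, for every matrix polynomial `R`
    (hbdry0 : ∀ R : MatPoly N,
      Tendsto (fun x : ℝ => (x : ℂ) • (Wmat N a ν δ φ x * pEval R x))
        (nhdsWithin 0 (Set.Ioi 0)) (nhds 0))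
    (hbdryInf : ∀ R : MatPoly N,
      Tendsto (fun x : ℝ => (x : ℂ) • (Wmat N a ν δ φ x * pEval R x)) atTop (nhds 0))
    (P Q : MatPoly N)
    -- absolute convergence of the two displayed integrals
    (hint₁ : IntegrableOn
      (fun x : ℝ => ((x : ℂ) • pEval (pDeriv P) x + (x : ℂ) • (pEval P x * (Amat N a - 1))) *
        Wmat N a ν δ φ x * (pEval Q x)ᴴ) (Set.Ioi 0))
    (hint₂ : IntegrableOn
      (fun x : ℝ => pEval P x * Wmat N a ν δ φ x *
        (-((x : ℂ) • pEval (pDeriv Q) x) - pEval Q x * (((1 + ν : ℝ) : ℂ) • 1 + Jmat N) +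
          ((x * deriv φ x - x : ℝ) : ℂ) • pEval Q x)ᴴ) (Set.Ioi 0)) :
    (∫ x in Set.Ioi (0 : ℝ),
        ((x : ℂ) • pEval (pDeriv P) x + (x : ℂ) • (pEval P x * (Amat N a - 1))) *
          Wmat N a ν δ φ x * (pEval Q x)ᴴ) =
      ∫ x in Set.Ioi (0 : ℝ),
        pEval P x * Wmat N a ν δ φ x *
          (-((x : ℂ) • pEval (pDeriv Q) x) - pEval Q x * (((1 + ν : ℝ) : ℂ) • 1 + Jmat N) +
            ((x * deriv φ x - x : ℝ) : ℂ) • pEval Q x)ᴴ := by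
  have : CompleteSpace (MatC N) := FiniteDimensional.complete ℂ _
  have hcont : ContinuousWithinAt
      (fun y : ℝ => (y : ℂ) • (pEval P y * Wmat N a ν δ φ y * (pEval Q y)ᴴ)) (Set.Ioi 0) 0 := by
    simpa [ContinuousWithinAt] using tendsto_smul_pEval_mul_mul_conjTranspose P Q hbdry0
  have hFTC := integral_Ioi_of_hasDerivAt_of_tendsto (continuousWithinAt_Ioi_iff_Ici.mp hcont)
    (fun x hx => hasDerivAt_smul_pEval_mul_Wmat_mul_conjTranspose a hx
      (hφ x (Set.mem_Ici.mpr hx.le)).differentiableAt P Q)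
    (hint₁.sub hint₂) (tendsto_smul_pEval_mul_mul_conjTranspose P Q hbdryInf)
  rw [Complex.ofReal_zero, zero_smul, sub_zero] at hFTC
  rw [← sub_eq_zero, ← integral_sub hint₁ hint₂]
  exact hFTC

theorem mutually_adjoint_D_Ddagger
    (N : ℕ) (hN : 2 ≤ N) (a : ℕ → ℝ) (ν : ℝ) (hν : 0 < ν)
    (δ : ℕ → ℝ) (hδ : ∀ k, 1 ≤ k → k ≤ N → 0 < δ k)
    (φ : ℝ → ℝ) (hφ : ∀ x ∈ Set.Ici (0 : ℝ), AnalyticAt ℝ φ x)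
    -- boundary condition: `x W(x) R(x) → 0` at both endpoints, for every matrix polynomial `R`
    (hbdry0 : ∀ R : MatPoly N,
      Tendsto (fun x : ℝ => (x : ℂ) • (Wmat N a ν δ φ x * pEval R x))
        (nhdsWithin 0 (Set.Ioi 0)) (nhds 0))
    (hbdryInf : ∀ R : MatPoly N,
      Tendsto (fun x : ℝ => (x : ℂ) • (Wmat N a ν δ φ x * pEval R x)) atTop (nhds 0))
    (P Q : MatPoly N)
    -- absolute convergence of the two displayed integrals
    (hint₁ : IntegrableOn
      (fun x : ℝ => ((x : ℂ) • pEval (pDeriv P) x + (x : ℂ) • (pEval P x * (Amat N a - 1))) *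
        Wmat N a ν δ φ x * (pEval Q x)ᴴ) (Set.Ioi 0))
    (hint₂ : IntegrableOn
      (fun x : ℝ => pEval P x * Wmat N a ν δ φ x *
        (-((x : ℂ) • pEval (pDeriv Q) x) - pEval Q x * (((1 + ν : ℝ) : ℂ) • 1 + Jmat N) +
          ((x * deriv φ x - x : ℝ) : ℂ) • pEval Q x)ᴴ) (Set.Ioi 0)) :
    (∫ x in Set.Ioi (0 : ℝ),
        ((x : ℂ) • pEval (pDeriv P) x + (x : ℂ) • (pEval P x * (Amat N a - 1))) *
          Wmat N a ν δ φ x * (pEval Q x)ᴴ) =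
      ∫ x in Set.Ioi (0 : ℝ),
        pEval P x * Wmat N a ν δ φ x *
          (-((x : ℂ) • pEval (pDeriv Q) x) - pEval Q x * (((1 + ν : ℝ) : ℂ) • 1 + Jmat N) +
            ((x * deriv φ x - x : ℝ) : ℂ) • pEval Q x)ᴴ :=
  mutually_adjoint_D_Ddagger_general N a ν δ φ hφ hbdry0 hbdryInf P Q hint₁ hint₂
end
end

section
/- The first-order operator 𝒞 given by (P·𝒞)(x) = x P(x) A − P(x) J is symmetric with respect to the weight W^{(ν)}_φ: for all N×N complex matrix polynomials P and Q, ∫₀^∞ (x P(x) A − P(x) J) · W^{(ν)}_φ(x) · Q(x)^* dx = ∫₀^∞ P(x) · W^{(ν)}_φ(x) · (x Q(x) A − Q(x) J)^* dx. -/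
/-!
Statement 1: The first-order operator 𝒞, (P·𝒞)(x) = x P(x) A − P(x) J, is symmetric with
respect to the weight `W^{(ν)}_φ`.
-/

open MeasureTheory Matrix Polynomial Filter

attribute [local instance] Matrix.normedAddCommGroup Matrix.normedSpace

noncomputable section

/-!
The two integrands agree pointwise. Moving `x A − J` across `P` and `Q`, this amounts to
`x A W − J W = x W A* − W J`. Since `[J, A] = A`, differentiating `s ↦ e^{-sA} J e^{sA}` shows
`e^{-xA} J e^{xA} = J + x A`, i.e. `J e^{xA} = e^{xA} J + x A e^{xA}`; dually
`e^{xA*} J = J e^{xA*} + x e^{xA*} A*`, and `J` commutes with the diagonal `T`.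
-/

namespace NormedSpace

open MulOpposite

section Commutator

variable {𝕂 𝔸 : Type*} [RCLike 𝕂] [NormedRing 𝔸] [NormedAlgebra 𝕂 𝔸] [CompleteSpace 𝔸]

theorem exp_smul_mul_exp_smul_neg (A : 𝔸) (s : 𝕂) : exp (s • A) * exp (s • -A) = 1 := by
  have hmem (x : 𝔸) : x ∈ Metric.eball (0 : 𝔸) (expSeries 𝕂 𝔸).radius :=
    (expSeries_radius_eq_top 𝕂 𝔸).symm ▸ edist_lt_top _ _
  rw [← exp_add_of_commute_of_mem_ball (𝕂 := 𝕂) ((Commute.refl A).neg_right.smul_left s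
    |>.smul_right s) (hmem _) (hmem _), smul_neg, add_neg_cancel, exp_zero]

theorem exp_neg_smul_mul_exp_smul_of_mul_sub_mul_eq {J A : 𝔸} (h : J * A - A * J = A) (t : 𝕂) :
    exp (t • -A) * J * exp (t • A) = J + t • A := by
  have hderiv (s : 𝕂) :
      HasDerivAt (fun s : 𝕂 => exp (s • -A) * J * exp (s • A) - s • A) 0 s := by
    refine ((((hasDerivAt_exp_smul_const' (-A) s).mul_const J).mul
      (hasDerivAt_exp_smul_const A s)).sub ((hasDerivAt_id s).smul_const A)).congr_deriv ?_
    have hA : Commute A (exp (s • -A)) := ((Commute.refl A).neg_right.smul_right s).exp_right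
    have hA' : Commute A (exp (s • A)) := ((Commute.refl A).smul_right s).exp_right
    have hinv : exp (s • -A) * exp (s • A) = 1 := by
      simpa using exp_smul_mul_exp_smul_neg (-A) s
    calc -A * exp (s • -A) * J * exp (s • A) + exp (s • -A) * J * (exp (s • A) * A) - (1 : 𝕂) • A
        = exp (s • -A) * (J * A - A * J) * exp (s • A) - A := by
          rw [← hA'.eq, neg_mul, hA.eq, one_smul]; noncomm_ring
      _ = 0 := by rw [h, mul_assoc, hA'.eq, ← mul_assoc, hinv, one_mul, sub_self]
  refine eq_add_of_sub_eq ?_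
  simpa using is_const_of_deriv_eq_zero (fun s => (hderiv s).differentiableAt)
    (fun s => (hderiv s).deriv) t 0

theorem mul_exp_smul_of_mul_sub_mul_eq {J A : 𝔸} (h : J * A - A * J = A) (t : 𝕂) :
    J * exp (t • A) = exp (t • A) * J + t • (A * exp (t • A)) := by
  calc J * exp (t • A) = exp (t • A) * (exp (t • -A) * J * exp (t • A)) := by
        rw [← mul_assoc, ← mul_assoc, exp_smul_mul_exp_smul_neg, one_mul]
    _ = _ := by
        rw [exp_neg_smul_mul_exp_smul_of_mul_sub_mul_eq h, mul_add, mul_smul_comm,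
          ((Commute.refl A).smul_right t).exp_right.eq]

theorem exp_smul_mul_of_mul_sub_mul_eq {J A : 𝔸} (h : A * J - J * A = A) (t : 𝕂) :
    exp (t • A) * J = J * exp (t • A) + t • (exp (t • A) * A) := by
  have := mul_exp_smul_of_mul_sub_mul_eq (𝔸 := 𝔸ᵐᵒᵖ) (J := op J) (A := op A)
    (by simpa using congrArg op h) t
  rw [← op_smul, exp_op] at this
  simpa using congrArg unop this

end Commutator

end NormedSpace

theorem smul_mul_sub_mul_eq_of_intertwining {S R : Type*} [CommSemiring S] [Ring R] [Algebra S R]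
    {J A A' E T E' : R} (c : S) (hE : J * E = E * J + c • (A * E)) (hT : Commute J T)
    (hE' : E' * J = J * E' + c • (E' * A')) :
    c • (A * (E * T * E')) - J * (E * T * E') = c • (E * T * E' * A') - E * T * E' * J := by
  have hJW : J * (E * T * E') = E * T * (J * E') + c • (A * (E * T * E')) := by
    rw [← mul_assoc, ← mul_assoc, hE, add_mul, add_mul, mul_assoc E J T, hT.eq]
    simp only [smul_mul_assoc, mul_assoc]
  have hWJ : E * T * E' * J = E * T * (J * E') + c • (E * T * E' * A') := by
    rw [mul_assoc _ E' J, hE', mul_add, mul_smul_comm]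
    simp only [mul_assoc]
  rw [hJW, hWJ]
  abel

theorem Matrix.sub_mul_mul_conjTranspose_eq_mul_mul_conjTranspose_sub {n α : Type*} [Fintype n]
    [CommRing α] [StarRing α] {c : α} (hc : star c = c) {A J W : Matrix n n α} (hJ : Jᴴ = J)
    (hW : c • (A * W) - J * W = c • (W * Aᴴ) - W * J) (P Q : Matrix n n α) :
    (c • (P * A) - P * J) * W * Qᴴ = P * W * (c • (Q * A) - Q * J)ᴴ := by
  calc (c • (P * A) - P * J) * W * Qᴴ = P * (c • (A * W) - J * W) * Qᴴ := by
        simp only [Matrix.mul_sub, Matrix.sub_mul, Matrix.mul_smul, Matrix.smul_mul, mul_assoc]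
    _ = P * (c • (W * Aᴴ) - W * J) * Qᴴ := by rw [hW]
    _ = P * W * (c • (Q * A) - Q * J)ᴴ := by
        rw [conjTranspose_sub, conjTranspose_smul, conjTranspose_mul, conjTranspose_mul, hJ, hc]
        simp only [Matrix.mul_sub, Matrix.sub_mul, Matrix.mul_smul, Matrix.smul_mul, mul_assoc]

theorem Jmat_mul_sub_mul_Amat (N : ℕ) (a : ℕ → ℝ) :
    Jmat N * Amat N a - Amat N a * Jmat N = Amat N a := by
  ext i j
  simp only [Jmat, Amat, diagonal_mul, mul_diagonal, Matrix.sub_apply, of_apply]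
  split_ifs with h
  · rw [h]; push_cast; ring
  · ring

theorem Jmat_conjTranspose (N : ℕ) : (Jmat N)ᴴ = Jmat N := by
  simp [Jmat, diagonal_conjTranspose]

theorem Amat_conjTranspose_mul_sub_mul_Jmat (N : ℕ) (a : ℕ → ℝ) :
    (Amat N a)ᴴ * Jmat N - Jmat N * (Amat N a)ᴴ = (Amat N a)ᴴ := by
  simpa [Jmat_conjTranspose] using congrArg conjTranspose (Jmat_mul_sub_mul_Amat N a)

theorem commute_Jmat_Tmat (N : ℕ) (ν : ℝ) (δ : ℕ → ℝ) (φ : ℝ → ℝ) (x : ℝ) :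
    Commute (Jmat N) (Tmat N ν δ φ x) :=
  commute_diagonal _ _

open scoped Matrix.Norms.Operator in
theorem smul_Amat_mul_Wmat_sub (N : ℕ) (a : ℕ → ℝ) (ν : ℝ) (δ : ℕ → ℝ) (φ : ℝ → ℝ) (x : ℝ) :
    (x : ℂ) • (Amat N a * Wmat N a ν δ φ x) - Jmat N * Wmat N a ν δ φ x =
      (x : ℂ) • (Wmat N a ν δ φ x * (Amat N a)ᴴ) - Wmat N a ν δ φ x * Jmat N :=
  smul_mul_sub_mul_eq_of_intertwining (x : ℂ)
    (NormedSpace.mul_exp_smul_of_mul_sub_mul_eq (Jmat_mul_sub_mul_Amat N a) _)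
    (commute_Jmat_Tmat N ν δ φ x)
    (NormedSpace.exp_smul_mul_of_mul_sub_mul_eq (Amat_conjTranspose_mul_sub_mul_Jmat N a) _)

theorem C_symmetric_general
    (N : ℕ) (a : ℕ → ℝ) (ν : ℝ) (δ : ℕ → ℝ) (φ : ℝ → ℝ) (P Q : MatPoly N) :
    (∫ x in Set.Ioi (0 : ℝ),
        ((x : ℂ) • (pEval P x * Amat N a) - pEval P x * Jmat N) *
          Wmat N a ν δ φ x * (pEval Q x)ᴴ) =
      ∫ x in Set.Ioi (0 : ℝ),
        pEval P x * Wmat N a ν δ φ x *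
          ((x : ℂ) • (pEval Q x * Amat N a) - pEval Q x * Jmat N)ᴴ := by
  congr 1
  funext x
  exact sub_mul_mul_conjTranspose_eq_mul_mul_conjTranspose_sub (Complex.conj_ofReal x)
    (Jmat_conjTranspose N) (smul_Amat_mul_Wmat_sub N a ν δ φ x) _ _

theorem C_symmetric
    (N : ℕ) (hN : 2 ≤ N) (a : ℕ → ℝ) (ν : ℝ) (hν : 0 < ν)
    (δ : ℕ → ℝ) (hδ : ∀ k, 1 ≤ k → k ≤ N → 0 < δ k)
    (φ : ℝ → ℝ) (hφ : ∀ x ∈ Set.Ici (0 : ℝ), AnalyticAt ℝ φ x)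
    -- boundary condition: `x W(x) R(x) → 0` at both endpoints, for every matrix polynomial `R`
    (hbdry0 : ∀ R : MatPoly N,
      Tendsto (fun x : ℝ => (x : ℂ) • (Wmat N a ν δ φ x * pEval R x))
        (nhdsWithin 0 (Set.Ioi 0)) (nhds 0))
    (hbdryInf : ∀ R : MatPoly N,
      Tendsto (fun x : ℝ => (x : ℂ) • (Wmat N a ν δ φ x * pEval R x)) atTop (nhds 0))
    (P Q : MatPoly N)
    -- absolute convergence of the two displayed integrals
    (hint₁ : @IntegrableOn ℝ (MatC N) _
      (Matrix.normedAddCommGroup : NormedAddCommGroup (MatC N)).toUniformSpace.toTopologicalSpace _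
      (fun x : ℝ => ((x : ℂ) • (pEval P x * Amat N a) - pEval P x * Jmat N) *
        Wmat N a ν δ φ x * (pEval Q x)ᴴ) (Set.Ioi 0) volume)
    (hint₂ : @IntegrableOn ℝ (MatC N) _
      (Matrix.normedAddCommGroup : NormedAddCommGroup (MatC N)).toUniformSpace.toTopologicalSpace _
      (fun x : ℝ => pEval P x * Wmat N a ν δ φ x *
        ((x : ℂ) • (pEval Q x * Amat N a) - pEval Q x * Jmat N)ᴴ) (Set.Ioi 0) volume) :
    (∫ x in Set.Ioi (0 : ℝ),
        ((x : ℂ) • (pEval P x * Amat N a) - pEval P x * Jmat N) *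
          Wmat N a ν δ φ x * (pEval Q x)ᴴ) =
      ∫ x in Set.Ioi (0 : ℝ),
        pEval P x * Wmat N a ν δ φ x *
          ((x : ℂ) • (pEval Q x * Amat N a) - pEval Q x * Jmat N)ᴴ :=
  C_symmetric_general N a ν δ φ P Q
end
end

section
/- Let φ(x) = Σ_{i≥0} a_i x^i be a function analytic on a neighborhood of [0,∞), and let i_1 < i_2 < ⋯ < i_ℓ be distinct indices with a_{i_t} ≠ 0 for t = 1,…,ℓ. Then the ℓ functions x ↦ x^{i_t} φ^{(i_t)}(x) on (0,∞), t = 1,…,ℓ, are linearly independent over ℂ; equivalently, the complex vector space they span has dimension ℓ. -/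
/-!
Suppose `∑ c_t x^{e_t} g_t(x) = 0` for all `x > 0`, where the exponents `e_t` are distinct and each
`g_t` is continuous at `0` with `g_t(0) ≠ 0`. If some `c_t` were nonzero, take such a `t = s` with
`e_s` minimal and divide by `x^{e_s}`: letting `x → 0⁺` leaves `c_s g_s(0) = 0`. For the theorem,
`g_t = φ^{(i_t)}`, which is continuous at `0` because `φ` is analytic there.
-/

open Finset

theorem AnalyticAt.continuousAt_iteratedDeriv {𝕜 F : Type*} [NontriviallyNormedField 𝕜]
    [NormedAddCommGroup F] [NormedSpace 𝕜 F] [CompleteSpace F] {f : 𝕜 → F} {x : 𝕜}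
    (h : AnalyticAt 𝕜 f x) (n : ℕ) : ContinuousAt (iteratedDeriv n f) x := by
  rw [iteratedDeriv_eq_iterate]
  exact (h.iterated_deriv n).continuousAt

theorem linearIndependent_pow_mul_of_continuousAt {κ : Type*} [Fintype κ] {e : κ → ℕ}
    (he : Function.Injective e) {g : κ → ℝ → ℂ} (hg : ∀ t, ContinuousAt (g t) 0)
    (hg0 : ∀ t, g t 0 ≠ 0) :
    LinearIndependent ℂ (fun t (x : Set.Ioi (0 : ℝ)) => ((x : ℝ) : ℂ) ^ e t * g t x) := by
  rw [Fintype.linearIndependent_iff]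
  intro c hc
  by_contra! ⟨t₀, ht₀⟩
  obtain ⟨s, hs, hmin⟩ :=
    (univ.filter (c · ≠ 0)).exists_min_image e ⟨t₀, by simpa using ht₀⟩
  simp only [mem_filter, mem_univ, true_and] at hs hmin
  let F : ℝ → ℂ := fun x => ∑ t, c t * ((x : ℂ) ^ (e t - e s) * g t x)
  have hfactor : ∀ x : ℝ, (x : ℂ) ^ e s * F x = ∑ t, c t * ((x : ℂ) ^ e t * g t x) := by
    intro x
    simp only [F, mul_sum]
    refine sum_congr rfl fun t _ => ?_
    by_cases hct : c t = 0
    · simp [hct]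
    · rw [← pow_mul_pow_sub (x : ℂ) (hmin t hct)]
      ring
  have hF_pos : Set.MapsTo F (Set.Ioi 0) {0} := by
    intro x (hx : 0 < x)
    have hsum := congrFun hc ⟨x, hx⟩
    simp only [Finset.sum_apply, Pi.smul_apply, smul_eq_mul, Pi.zero_apply] at hsum
    rw [← hfactor] at hsum
    exact (mul_eq_zero.mp hsum).resolve_left (pow_ne_zero _ (by exact_mod_cast hx.ne'))
  have hF_cont : ContinuousAt F 0 := by
    fun_prop
  have hF_zero : F 0 = c s * g s 0 := by
    simp only [F]
    rw [sum_eq_single s]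
    · simp
    · intro t _ hts
      by_cases hct : c t = 0
      · simp [hct]
      · have hlt : e s < e t := (hmin t hct).lt_of_ne (he.ne hts.symm)
        simp [Nat.sub_ne_zero_of_lt hlt]
    · simp
  have hF_vanish : F 0 = 0 := by
    simpa using hF_cont.continuousWithinAt.mem_closure (by simp) hF_pos
  exact mul_ne_zero hs (hg0 s) (hF_zero ▸ hF_vanish)

theorem xj_phij_linearIndependent
    (φ : ℝ → ℂ) (hφ : ∀ x ∈ Set.Ici (0 : ℝ), AnalyticAt ℝ φ x)
    (ℓ : ℕ) (ι : Fin ℓ → ℕ) (hmono : StrictMono ι)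
    (hne : ∀ t : Fin ℓ, iteratedDeriv (ι t) φ 0 ≠ 0) :
    LinearIndependent ℂ
      (fun t : Fin ℓ => fun x : Set.Ioi (0 : ℝ) =>
        ((x : ℝ) : ℂ) ^ (ι t) * iteratedDeriv (ι t) φ (x : ℝ)) := by
  have hφ₀ : AnalyticAt ℝ φ 0 := hφ 0 Set.self_mem_Ici
  exact linearIndependent_pow_mul_of_continuousAt hmono.injective
    (fun t => hφ₀.continuousAt_iteratedDeriv (ι t)) hne
end

section
/- The element z = 𝒟 + 𝒟† + 2m − m_1 belongs to the center of the Lie algebra g_φ: [z, w] = 0 for every w ∈ g_φ. -/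
open Matrix
open scoped ContDiff

attribute [local instance] Matrix.normedAddCommGroup Matrix.normedSpace

noncomputable section

/-- the right-acting operator `𝒟`, `(Q·𝒟)(x) = x Q'(x) + x Q(x)(A−1)` -/
def OpD (N : ℕ) (a : ℕ → ℝ) : (ℝ → MatC N) → ℝ → MatC N := fun Q x =>
  (x : ℂ) • deriv Q x + (x : ℂ) • (Q x * (Amat N a - 1))

/-- the right-acting operator `𝒟†`,
`(Q·𝒟†)(x) = −x Q'(x) − Q(x)(1+ν+J) + (xφ'(x) − x) Q(x)` -/
def OpDdag (N : ℕ) (ν : ℝ) (φ : ℂ → ℂ) : (ℝ → MatC N) → ℝ → MatC N := fun Q x =>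
  -((x : ℂ) • deriv Q x) - Q x * (((1 : ℂ) + (ν : ℂ)) • (1 : MatC N) + Jmat N) +
    ((x : ℂ) * deriv φ (x : ℂ) - (x : ℂ)) • Q x

/-- the right-acting multiplication operator `m`, `(Q·m)(x) = x Q(x)` -/
def OpM (N : ℕ) : (ℝ → MatC N) → ℝ → MatC N := fun Q x => (x : ℂ) • Q x

/-- the right-acting multiplication operator `m_j`, `(Q·m_j)(x) = x^j φ^{(j)}(x) Q(x)` -/
def OpMj (N : ℕ) (φ : ℂ → ℂ) (j : ℕ) : (ℝ → MatC N) → ℝ → MatC N := fun Q x =>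
  ((x : ℂ) ^ j * iteratedDeriv j φ (x : ℂ)) • Q x

/-- the Lie bracket of right-acting operators: since `Q·(𝒮𝒯) = (Q·𝒮)·𝒯`, the product `𝒮𝒯`
acts as `T ∘ S`, and `[𝒮,𝒯] = 𝒮𝒯 − 𝒯𝒮` acts as `Q ↦ T (S Q) − S (T Q)`. -/
def rbrk {N : ℕ} (S T : (ℝ → MatC N) → ℝ → MatC N) : (ℝ → MatC N) → ℝ → MatC N :=
  fun Q => T (S Q) - S (T Q)

/-- the Lie algebra `g_φ`, i.e. the complex span of `{1, 𝒟, 𝒟†, m, m₁, m₂, …}` inside the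
space of right-acting operators -/
def gphi (N : ℕ) (a : ℕ → ℝ) (ν : ℝ) (φ : ℂ → ℂ) :
    Submodule ℂ ((ℝ → MatC N) → ℝ → MatC N) :=
  Submodule.span ℂ
    ({id, OpD N a, OpDdag N ν φ, OpM N} ∪ Set.range fun j : ℕ => OpMj N φ (j + 1))

/-- the element `z = 𝒟 + 𝒟† + 2m − m₁` -/
def zElt (N : ℕ) (a : ℕ → ℝ) (ν : ℝ) (φ : ℂ → ℂ) : (ℝ → MatC N) → ℝ → MatC N :=
  fun Q => OpD N a Q + OpDdag N ν φ Q + (2 : ℂ) • OpM N Q - OpMj N φ 1 Q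

/-!
On functions `Q`, the element `z` acts as right multiplication by `M(x) = x A − B` with
`B = (1 + ν) + J`: the derivative terms of `𝒟` and `𝒟†` cancel, and `2m − m₁` absorbs their scalar
terms. Every generator of `g_φ` is a first-order operator `Q ↦ c Q' + Q C + s Q`, and its bracket
with right multiplication by `M` is right multiplication by `c M' + [M, C]`. For `𝒟` and `𝒟†`
this vanishes because `[A, J] = −A`, and for the multiplication operators `c = 0` and `C = 0`.
-/

section RightMultiplication

variable {N : ℕ}

def rightMulOp (M : ℝ → MatC N) : (ℝ → MatC N) → ℝ → MatC N := fun Q x => Q x * M x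

def firstOrderOp (c : ℝ → ℂ) (C : ℝ → MatC N) (s : ℝ → ℂ) : (ℝ → MatC N) → ℝ → MatC N :=
  fun Q x => c x • deriv Q x + Q x * C x + s x • Q x

theorem deriv_matrix_mul {Q M : ℝ → MatC N} {x : ℝ} (hQ : DifferentiableAt ℝ Q x)
    (hM : DifferentiableAt ℝ M x) :
    deriv (fun y => Q y * M y) x = deriv Q x * M x + Q x * deriv M x := by
  let mul : MatC N →L[ℝ] MatC N →L[ℝ] MatC N := LinearMap.toContinuousLinearMap
    (LinearMap.toContinuousLinearMap.toLinearMap ∘ₗ LinearMap.mul ℝ (MatC N))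
  rw [add_comm]
  exact (mul.hasDerivAt_of_bilinear (fun _ => hQ.hasDerivAt) (fun _ => hM.hasDerivAt)).deriv

theorem rbrk_rightMulOp_firstOrderOp {M : ℝ → MatC N} {Q : ℝ → MatC N} {x : ℝ}
    (hQ : DifferentiableAt ℝ Q x) (hM : DifferentiableAt ℝ M x) (c : ℝ → ℂ) (C : ℝ → MatC N)
    (s : ℝ → ℂ) :
    rbrk (rightMulOp M) (firstOrderOp c C s) Q x = Q x * (c x • deriv M x + ⁅M x, C x⁆) := by
  unfold rbrk rightMulOp firstOrderOp
  simp only [Pi.sub_apply, deriv_matrix_mul hQ hM, Ring.lie_def]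
  simp only [mul_add, add_mul, mul_sub, smul_add, mul_smul_comm, smul_mul_assoc, mul_assoc]
  abel

def rightMulCommutant (M : ℝ → MatC N) : Submodule ℂ ((ℝ → MatC N) → ℝ → MatC N) where
  carrier := {w | ∀ Q, Differentiable ℝ Q → ∀ x, rbrk (rightMulOp M) w Q x = 0}
  zero_mem' := by simp [rbrk, rightMulOp]
  add_mem' {w₁ w₂} h₁ h₂ Q hQ x := by
    have hsplit : rbrk (rightMulOp M) (w₁ + w₂) Q x =
        rbrk (rightMulOp M) w₁ Q x + rbrk (rightMulOp M) w₂ Q x := by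
      simp only [rbrk, rightMulOp, Pi.sub_apply, Pi.add_apply, add_mul]
      abel
    rw [hsplit, h₁ Q hQ x, h₂ Q hQ x, add_zero]
  smul_mem' r w h Q hQ x := by
    have hsplit : rbrk (rightMulOp M) (r • w) Q x = r • rbrk (rightMulOp M) w Q x := by
      simp only [rbrk, rightMulOp, Pi.sub_apply, Pi.smul_apply, smul_mul_assoc, smul_sub]
    rw [hsplit, h Q hQ x, smul_zero]

theorem firstOrderOp_mem_rightMulCommutant {M : ℝ → MatC N} (hM : Differentiable ℝ M)
    {c : ℝ → ℂ} {C : ℝ → MatC N} (s : ℝ → ℂ) (hcC : ∀ x, c x • deriv M x + ⁅M x, C x⁆ = 0) :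
    firstOrderOp c C s ∈ rightMulCommutant M := fun Q hQ x => by
  rw [rbrk_rightMulOp_firstOrderOp (hQ x) (hM x), hcC, mul_zero]

theorem scalarOp_mem_rightMulCommutant {M : ℝ → MatC N} (hM : Differentiable ℝ M)
    (s : ℝ → ℂ) : firstOrderOp 0 0 s ∈ rightMulCommutant M :=
  firstOrderOp_mem_rightMulCommutant hM s fun x => by simp [Ring.lie_def]

end RightMultiplication

section Generators

variable {N : ℕ} (a : ℕ → ℝ) (ν : ℝ) (φ : ℂ → ℂ)

theorem Amat_mul_Jmat : Amat N a * Jmat N = Jmat N * Amat N a - Amat N a := by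
  ext i j
  by_cases h : (i : ℕ) = (j : ℕ) + 1
  · simp [Jmat, Amat, h]
    ring
  · simp [Jmat, Amat, h]

theorem Amat_mul_smul_one_add_Jmat (t : ℂ) :
    Amat N a * (t • 1 + Jmat N) = (t • 1 + Jmat N) * Amat N a - Amat N a := by
  rw [mul_add, add_mul, Amat_mul_Jmat, mul_smul_comm, smul_mul_assoc, mul_one, one_mul]
  abel

theorem hasDerivAt_ofReal_smul_sub (A B : MatC N) (x : ℝ) :
    HasDerivAt (fun y : ℝ => (y : ℂ) • A - B) A x := by
  have h := ((hasDerivAt_id x).smul_const A).sub_const B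
  simp only [id, one_smul, ← Complex.coe_smul] at h
  exact h

def zMatrix (x : ℝ) : MatC N := (x : ℂ) • Amat N a - (((1 : ℂ) + ν) • 1 + Jmat N)

theorem deriv_zMatrix (x : ℝ) : deriv (zMatrix (N := N) a ν) x = Amat N a :=
  (hasDerivAt_ofReal_smul_sub _ _ x).deriv

theorem differentiable_zMatrix : Differentiable ℝ (zMatrix (N := N) a ν) :=
  fun x => (hasDerivAt_ofReal_smul_sub _ _ x).differentiableAt

theorem zElt_eq_rightMulOp : zElt N a ν φ = rightMulOp (zMatrix a ν) := by
  ext Q x : 2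
  simp only [zElt, Pi.add_apply, Pi.sub_apply, Pi.smul_apply, OpD, OpDdag, OpM, OpMj,
    rightMulOp, zMatrix, pow_one, iteratedDeriv_one, mul_sub, mul_one, mul_smul_comm]
  module

theorem OpD_eq_firstOrderOp :
    OpD N a = firstOrderOp (fun x => x) (fun x => (x : ℂ) • (Amat N a - 1)) 0 := by
  ext Q x : 2
  simp [OpD, firstOrderOp]

theorem OpDdag_eq_firstOrderOp :
    OpDdag N ν φ = firstOrderOp (fun x => -x) (fun _ => -(((1 : ℂ) + ν) • 1 + Jmat N))
      (fun x => x * deriv φ x - x) := by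
  ext Q x : 2
  simp only [OpDdag, firstOrderOp, mul_neg, neg_smul]
  abel

theorem id_eq_firstOrderOp : (id : (ℝ → MatC N) → ℝ → MatC N) = firstOrderOp 0 0 1 := by
  ext Q x : 2
  simp [firstOrderOp]

theorem OpM_eq_firstOrderOp : OpM N = firstOrderOp 0 0 (fun x => x) := by
  ext Q x : 2
  simp [OpM, firstOrderOp]

theorem OpMj_eq_firstOrderOp (j : ℕ) :
    OpMj N φ j = firstOrderOp 0 0 (fun x => x ^ j * iteratedDeriv j φ x) := by
  ext Q x : 2
  simp [OpMj, firstOrderOp]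

theorem OpD_mem_rightMulCommutant : OpD N a ∈ rightMulCommutant (zMatrix a ν) := by
  rw [OpD_eq_firstOrderOp]
  refine firstOrderOp_mem_rightMulCommutant (differentiable_zMatrix a ν) _ fun x => ?_
  simp only [deriv_zMatrix, zMatrix, Ring.lie_def, sub_mul, mul_sub, smul_mul_assoc,
    mul_smul_comm, mul_one, one_mul, Amat_mul_smul_one_add_Jmat]
  module

theorem OpDdag_mem_rightMulCommutant : OpDdag N ν φ ∈ rightMulCommutant (zMatrix a ν) := by
  rw [OpDdag_eq_firstOrderOp]
  refine firstOrderOp_mem_rightMulCommutant (differentiable_zMatrix a ν) _ fun x => ?_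
  simp only [deriv_zMatrix, zMatrix, Ring.lie_def, sub_mul, mul_sub, mul_neg, neg_mul,
    smul_mul_assoc, mul_smul_comm, Amat_mul_smul_one_add_Jmat]
  module

theorem gphi_le_rightMulCommutant : gphi N a ν φ ≤ rightMulCommutant (zMatrix a ν) := by
  have hM := differentiable_zMatrix (N := N) a ν
  refine Submodule.span_le.mpr ?_
  rintro w (hw | ⟨j, rfl⟩)
  · rcases hw with rfl | rfl | rfl | rfl
    · rw [id_eq_firstOrderOp]; exact scalarOp_mem_rightMulCommutant hM _
    · exact OpD_mem_rightMulCommutant a ν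
    · exact OpDdag_mem_rightMulCommutant a ν φ
    · rw [OpM_eq_firstOrderOp]; exact scalarOp_mem_rightMulCommutant hM _
  · show OpMj N φ (j + 1) ∈ _
    rw [OpMj_eq_firstOrderOp]; exact scalarOp_mem_rightMulCommutant hM _

end Generators

theorem z_is_central_general
    (N : ℕ) (a : ℕ → ℝ) (ν : ℝ)
    (φ : ℂ → ℂ) :
    ∀ w ∈ gphi N a ν φ, ∀ Q : ℝ → MatC N, ContDiff ℝ ∞ Q → ∀ x : ℝ, 0 < x →
      rbrk (zElt N a ν φ) w Q x = 0 := by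
  intro w hw Q hQ x _
  rw [zElt_eq_rightMulOp]
  exact gphi_le_rightMulCommutant a ν φ hw Q (hQ.differentiable (by simp)) x

/-- the element `z = 𝒟 + 𝒟† + 2m − m₁` is central in `g_φ`:
`[z, w] = 0` for every `w ∈ g_φ` (the bracket being `Q·[z,w] = (w (z Q)) − (z (w Q))`
in the right-action convention). -/
theorem z_is_central
    (N : ℕ) (hN : 2 ≤ N) (a : ℕ → ℝ) (ν : ℝ) (hν : 0 < ν)
    (φ : ℂ → ℂ) (hφ : Differentiable ℂ φ) :
    ∀ w ∈ gphi N a ν φ, ∀ Q : ℝ → MatC N, ContDiff ℝ ∞ Q → ∀ x : ℝ, 0 < x →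
      rbrk (zElt N a ν φ) w Q x = 0 :=
  z_is_central_general N a ν φ
end
end

section
/- Let R : (0,∞) → M_N(ℂ) be twice differentiable and satisfy the matrix differential equation x R''(x) + R'(x)(1+ν−x+J) + n R(x) + J R(x) − R(x) J = 0 for all x > 0. Then for every pair of indices 1 ≤ i, j ≤ N, the scalar entry y(x) = R(x)_{i,j} satisfies the generalized Laguerre differential equation x y''(x) + (ν + j + 1 − x) y'(x) + (n + i − j) y(x) = 0. Moreover, if each entry of R is a polynomial and n + i − j < 0, then R(x)_{i,j} = 0 identically. -/
open Matrix Polynomial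

attribute [local instance] Matrix.normedAddCommGroup Matrix.normedSpace

noncomputable section

/-- the entry map as a continuous linear map -/
def entryCLM (N : ℕ) (i j : Fin N) : MatC N →L[ℝ] ℂ :=
  LinearMap.toContinuousLinearMap
    { toFun := fun A => A i j
      map_add' := fun _ _ => rfl
      map_smul' := fun _ _ => rfl }

lemma deriv_entry {N : ℕ} (i j : Fin N) {R : ℝ → MatC N} {x : ℝ}
    (hR : DifferentiableAt ℝ R x) :
    deriv (fun t => R t i j) x = deriv R x i j := by
  have h := (entryCLM N i j).hasFDerivAt.comp_hasDerivAt x hR.hasDerivAt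
  exact h.deriv

lemma poly_deriv (q : Polynomial ℂ) (x : ℝ) :
    HasDerivAt (fun t : ℝ => q.eval (t : ℂ)) (q.derivative.eval (x : ℂ)) x :=
  (q.hasDerivAt (x : ℂ)).comp_ofReal

/-- Statement 18: if `R` is twice differentiable on `(0,∞)` and satisfies
`x R'' + R'(1+ν−x+J) + nR + JR − RJ = 0` there, then each entry `y(x) = R(x)_{i,j}`
(with the rows/columns labelled `1,…,N`, so the pair `(i,j) : Fin N × Fin N` corresponds to
the labels `(i+1, j+1)`) satisfies the generalized Laguerre equation
`x y'' + (ν + (j+1) + 1 − x) y' + (n + (i+1) − (j+1)) y = 0`; moreover if the entries of `R`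
are polynomials and `n + (i+1) − (j+1) < 0` then `R(x)_{i,j} = 0` identically. -/
theorem entries_satisfy_Laguerre_ODE
    (N : ℕ) (hN : 2 ≤ N) (ν : ℝ) (hν : 0 < ν) (n : ℕ)
    (R : ℝ → MatC N)
    (hd1 : ∀ x ∈ Set.Ioi (0 : ℝ), DifferentiableAt ℝ R x)
    (hd2 : ∀ x ∈ Set.Ioi (0 : ℝ), DifferentiableAt ℝ (deriv R) x)
    (hODE : ∀ x : ℝ, 0 < x →
      (x : ℂ) • deriv (deriv R) x +
          deriv R x * (((1 + ν - x : ℝ) : ℂ) • (1 : MatC N) + Jmat N) +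
          (n : ℂ) • R x + Jmat N * R x - R x * Jmat N = 0) :
    (∀ i j : Fin N, ∀ x : ℝ, 0 < x →
      (x : ℂ) * deriv (deriv fun t : ℝ => R t i j) x +
          ((ν : ℂ) + (((j : ℕ) + 1 : ℕ) : ℂ) + 1 - (x : ℂ)) *
            deriv (fun t : ℝ => R t i j) x +
          ((n : ℂ) + (((i : ℕ) + 1 : ℕ) : ℂ) - (((j : ℕ) + 1 : ℕ) : ℂ)) * R x i j = 0) ∧
    ((∃ Rp : MatPoly N, ∀ x : ℝ, 0 < x → R x = pEval Rp x) →
      ∀ i j : Fin N, ((n : ℤ) + ((i : ℕ) + 1) - ((j : ℕ) + 1) < 0) →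
        ∀ x : ℝ, 0 < x → R x i j = 0) := by
  have part1 : ∀ i j : Fin N, ∀ x : ℝ, 0 < x →
      (x : ℂ) * deriv (deriv fun t : ℝ => R t i j) x +
          ((ν : ℂ) + (((j : ℕ) + 1 : ℕ) : ℂ) + 1 - (x : ℂ)) *
            deriv (fun t : ℝ => R t i j) x +
          ((n : ℂ) + (((i : ℕ) + 1 : ℕ) : ℂ) - (((j : ℕ) + 1 : ℕ) : ℂ)) * R x i j = 0 := by
    intro i j x hx
    have hx' : x ∈ Set.Ioi (0 : ℝ) := hx
    have h1 : deriv (fun t => R t i j) x = deriv R x i j := deriv_entry i j (hd1 x hx')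
    have h2 : deriv (deriv fun t : ℝ => R t i j) x = deriv (deriv R) x i j := by
      have hev : (deriv fun t : ℝ => R t i j) =ᶠ[nhds x] (fun t => deriv R t i j) := by
        filter_upwards [Ioi_mem_nhds hx] with t ht using deriv_entry i j (hd1 t ht)
      rw [hev.deriv_eq]
      exact deriv_entry i j (hd2 x hx')
    have h := congrFun (congrFun (hODE x hx) i) j
    have hexp : deriv R x * (((1 + ν - x : ℝ) : ℂ) • (1 : MatC N) + Jmat N)
        = ((1 + ν - x : ℝ) : ℂ) • deriv R x + deriv R x * Jmat N := by
      rw [mul_add, Matrix.mul_smul, mul_one]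
    rw [hexp] at h
    simp only [Jmat, Matrix.add_apply, Matrix.sub_apply, Matrix.smul_apply,
      Matrix.mul_diagonal, Matrix.diagonal_mul, Matrix.zero_apply, smul_eq_mul] at h
    rw [h1, h2]
    push_cast at h ⊢
    linear_combination h
  refine ⟨part1, ?_⟩
  rintro ⟨Rp, hRp⟩ i j hneg x hx
  set q : Polynomial ℂ := Rp i j with hq
  have hEntry : ∀ t : ℝ, 0 < t → R t i j = q.eval (t : ℂ) := by
    intro t ht
    rw [hRp t ht]; rfl
  -- derivatives of the entry function coincide with polynomial derivatives on Ioi 0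
  have hder1 : ∀ t : ℝ, 0 < t →
      deriv (fun s : ℝ => R s i j) t = q.derivative.eval (t : ℂ) := by
    intro t ht
    have hev : (fun s : ℝ => R s i j) =ᶠ[nhds t] (fun s : ℝ => q.eval (s : ℂ)) := by
      filter_upwards [Ioi_mem_nhds ht] with s hs using hEntry s hs
    rw [hev.deriv_eq]
    exact (poly_deriv q t).deriv
  have hder2 : ∀ t : ℝ, 0 < t →
      deriv (deriv fun s : ℝ => R s i j) t = q.derivative.derivative.eval (t : ℂ) := by
    intro t ht
    have hev : (deriv fun s : ℝ => R s i j) =ᶠ[nhds t]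
        (fun s : ℝ => q.derivative.eval (s : ℂ)) := by
      filter_upwards [Ioi_mem_nhds ht] with s hs using hder1 s hs
    rw [hev.deriv_eq]
    exact (poly_deriv q.derivative t).deriv
  set b : ℂ := (ν : ℂ) + (((j : ℕ) + 1 : ℕ) : ℂ) + 1 with hb
  set a : ℂ := (n : ℂ) + (((i : ℕ) + 1 : ℕ) : ℂ) - (((j : ℕ) + 1 : ℕ) : ℂ) with ha
  set P : Polynomial ℂ :=
    X * q.derivative.derivative + (C b - X) * q.derivative + C a * q with hP
  have hProot : ∀ t : ℝ, 0 < t → P.eval (t : ℂ) = 0 := by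
    intro t ht
    have h := part1 i j t ht
    rw [hder1 t ht, hder2 t ht, hEntry t ht] at h
    simp only [hP, eval_add, eval_mul, eval_sub, eval_X, eval_C]
    linear_combination h
  have hP0 : P = 0 := by
    apply P.eq_zero_of_infinite_isRoot
    apply Set.Infinite.mono (s := (fun t : ℝ => (t : ℂ)) '' Set.Ioi 0)
    · rintro z ⟨t, ht, rfl⟩
      exact hProot t ht
    · exact (Set.Ioi_infinite 0).image
        (fun s _ t _ h => Complex.ofReal_injective h)
  -- a ≠ d for every natural d, since a is a negative integer
  have haNe : ∀ d : ℕ, a - (d : ℂ) ≠ 0 := by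
    intro d
    have hZ : ((n : ℤ) + ((i : ℕ) + 1) - ((j : ℕ) + 1) - d) ≠ 0 := by omega
    have heq : a - (d : ℂ) = (((n : ℤ) + ((i : ℕ) + 1) - ((j : ℕ) + 1) - d : ℤ) : ℂ) := by
      rw [ha]; push_cast; ring
    rw [heq]
    exact_mod_cast hZ
  have hq0 : q = 0 := by
    by_contra hqne
    have hlead : q.coeff q.natDegree ≠ 0 := by
      rw [← Polynomial.leadingCoeff]
      exact Polynomial.leadingCoeff_ne_zero.mpr hqne
    rcases hd : q.natDegree with _ | m
    · -- q is a nonzero constant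
      have hqc : q = C (q.coeff 0) := Polynomial.eq_C_of_natDegree_eq_zero hd
      have hc := congrArg (Polynomial.coeff · 0) hP0
      simp only [hP] at hc
      rw [hqc] at hc
      simp [Polynomial.coeff_C, Polynomial.mul_coeff_zero] at hc
      rw [hd] at hlead
      rcases hc with hc | hc
      · exact haNe 0 (by simpa using sub_eq_zero_of_eq (a := a) (b := (0:ℂ)) (by simpa using hc))
      · exact hlead hc
    · have hc := congrArg (Polynomial.coeff · (m + 1)) hP0
      simp only [hP, Polynomial.coeff_add, Polynomial.coeff_zero, Polynomial.coeff_X_mul,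
        sub_mul, Polynomial.coeff_sub, Polynomial.coeff_C_mul,
        Polynomial.coeff_derivative] at hc
      have e1 : q.coeff (m + 1 + 1) = 0 := by
        apply Polynomial.coeff_eq_zero_of_natDegree_lt; omega
      rw [e1] at hc
      -- hc : 0 + (b * 0 - q.coeff (m+1) * (m+1)) + a * q.coeff (m+1) = 0  (roughly)
      have hfact : (a - ((m + 1 : ℕ) : ℂ)) * q.coeff (m + 1) = 0 := by
        push_cast at hc ⊢
        linear_combination hc
      rcases mul_eq_zero.mp hfact with h | h
      · exact haNe (m + 1) (by push_cast at h ⊢; linear_combination h)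
      · rw [hd] at hlead; exact hlead h
  rw [hEntry x hx, hq0]
  simp
end
end
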